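/- arXiv:1610.01981 — 2 statements merged into one kernel-verified Lean document; each statement's English description precedes it below -/
import Mathlib

section
/- Let a, c be integers with 0 < a < c and gcd(a,c) = 1. Then the tetrahedron T_{a,c−a,c} with vertices (0,0,0), (1,0,0), (0,1,0), (a,c−a,c) is empty. -/
/-- A point of `ℝ³` is a lattice point if all of its coordinates are integers. -/
def IsLatticePt (x : Fin 3 → ℝ) : Prop := ∀ i, ∃ m : ℤ, x i = (m : ℝ)

/-- The tetrahedron `T_{a,b,c}`: the convex hull of `(0,0,0)`, `(1,0,0)`, `(0,1,0)`, `(a,b,c)`. -/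
def Tet (a b c : ℤ) : Set (Fin 3 → ℝ) :=
  convexHull ℝ {![0,0,0], ![1,0,0], ![0,1,0], ![(a : ℝ), (b : ℝ), (c : ℝ)]}

/-- `T_{a,b,c}` is an empty lattice tetrahedron: it contains no point of `ℤ³`
other than its four vertices. -/
def TetIsEmpty (a b c : ℤ) : Prop :=
  ∀ x ∈ Tet a b c, IsLatticePt x →
    x = ![0,0,0] ∨ x = ![1,0,0] ∨ x = ![0,1,0] ∨ x = ![(a : ℝ), (b : ℝ), (c : ℝ)]

/-! The tetrahedron `T_{a,c-a,c}` lies in the four half-spaces bounded by its facet planes: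
`z ≥ 0`, `c x ≥ a z`, `c y ≥ (c - a) z` and `c x + c y ≤ c + (c - 1) z`. Adding the second
and third shows that `s = x + y - z` satisfies `c s ≥ 0`, and the fourth gives `c s ≤ c - z`,
so at a lattice point `s ∈ {0, 1}`. If `s = 1` then `z = 0` and the point is `(1,0,0)` or
`(0,1,0)`. If `s = 0` the second and third inequalities are equalities, so `c x = a z`; as
`gcd(a, c) = 1`, `c ∣ z`, and `0 ≤ z ≤ c` leaves the vertices `(0,0,0)` and `(a,c-a,c)`. -/

/-- The intersection of the four facet half-spaces of `T_{a,b,c}` (for `c > 0`). -/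
def tetHalfspaces (a b c : ℤ) : Set (Fin 3 → ℝ) :=
  {y | 0 ≤ y 2 ∧ (a : ℝ) * y 2 ≤ c * y 0 ∧ (b : ℝ) * y 2 ≤ c * y 1 ∧
    (c : ℝ) * y 0 + c * y 1 + (1 - a - b) * y 2 ≤ c}

theorem convex_tetHalfspaces (a b c : ℤ) : Convex ℝ (tetHalfspaces a b c) := by
  intro p ⟨hp₁, hp₂, hp₃, hp₄⟩ q ⟨hq₁, hq₂, hq₃, hq₄⟩ s t hs ht hst
  refine ⟨?_, ?_, ?_, ?_⟩ <;>
    simp only [Pi.add_apply, Pi.smul_apply, smul_eq_mul] <;> nlinarith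

theorem tet_subset_tetHalfspaces (a b : ℤ) {c : ℤ} (hc : 0 ≤ c) :
    Tet a b c ⊆ tetHalfspaces a b c := by
  have hcR : (0 : ℝ) ≤ c := by exact_mod_cast hc
  refine convexHull_min ?_ (convex_tetHalfspaces a b c)
  intro y hy
  rcases hy with rfl | rfl | rfl | rfl <;>
    refine ⟨?_, ?_, ?_, ?_⟩ <;>
    simp only [Matrix.cons_val, Matrix.cons_val_zero, Matrix.cons_val_one] <;> nlinarith

theorem IsLatticePt.exists_eq {x : Fin 3 → ℝ} (hx : IsLatticePt x) :
    ∃ m₀ m₁ m₂ : ℤ, x = ![(m₀ : ℝ), (m₁ : ℝ), (m₂ : ℝ)] := by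
  obtain ⟨m₀, h₀⟩ := hx 0
  obtain ⟨m₁, h₁⟩ := hx 1
  obtain ⟨m₂, h₂⟩ := hx 2
  exact ⟨m₀, m₁, m₂, by funext i; fin_cases i <;> assumption⟩

section LatticePoints

variable {a c x y z : ℤ}

theorem eq_zero_or_eq_of_coprime_of_mul_eq (hg : Int.gcd a c = 1) (hc : 0 < c)
    (hz₀ : 0 ≤ z) (hzc : z ≤ c) (hxz : c * x = a * z) : z = 0 ∨ z = c := by
  have hdvd : c ∣ z := by
    have hcop : IsCoprime c a := by
      rwa [Int.isCoprime_iff_gcd_eq_one, Int.gcd_comm]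
    exact hcop.dvd_of_dvd_mul_left ⟨x, hxz.symm⟩
  obtain ⟨k, rfl⟩ := hdvd
  have hk : k = 0 ∨ k = 1 := by
    rcases lt_trichotomy k 0 with hk | hk | hk
    · nlinarith
    · exact Or.inl hk
    · right; nlinarith
  rcases hk with rfl | rfl <;> simp

theorem eq_vertex_of_mem_tetHalfspaces (ha : 0 < a) (hac : a < c) (hg : Int.gcd a c = 1)
    (h₁ : 0 ≤ z) (h₂ : a * z ≤ c * x) (h₃ : (c - a) * z ≤ c * y)
    (h₄ : c * x + c * y + (1 - a - (c - a)) * z ≤ c) :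
    (x = 0 ∧ y = 0 ∧ z = 0) ∨ (x = 1 ∧ y = 0 ∧ z = 0) ∨ (x = 0 ∧ y = 1 ∧ z = 0) ∨
      (x = a ∧ y = c - a ∧ z = c) := by
  have hc : 0 < c := ha.trans hac
  have hs₀ : 0 ≤ x + y - z := by nlinarith
  have hs₁ : x + y - z ≤ 1 := by nlinarith
  rcases (by omega : x + y - z = 0 ∨ x + y - z = 1) with hs | hs
  · have hxz : c * x = a * z := by nlinarith
    have hzc : z ≤ c := by nlinarith
    rcases eq_zero_or_eq_of_coprime_of_mul_eq hg hc h₁ hzc hxz with hz | hz <;> subst z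
    · have hx : x = 0 := by simpa [hc.ne'] using hxz
      omega
    · have hx : x = a := mul_left_cancel₀ hc.ne' (hxz.trans (mul_comm a c))
      omega
  · have hz : z = 0 := by nlinarith
    subst hz
    have hx : 0 ≤ x := by nlinarith
    have hy : 0 ≤ y := by nlinarith
    omega

end LatticePoints

/-- If `0 < a < c` and `gcd(a,c) = 1`, then the tetrahedron `T_{a,c-a,c}` with
vertices `(0,0,0)`, `(1,0,0)`, `(0,1,0)`, `(a,c-a,c)` is empty. -/
theorem stmt_12 (a c : ℤ) (ha : 0 < a) (hac : a < c)
    (hg : Int.gcd a c = 1) :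
    TetIsEmpty a (c - a) c := by
  intro p hp hlat
  obtain ⟨x, y, z, rfl⟩ := hlat.exists_eq
  obtain ⟨h₁, h₂, h₃, h₄⟩ := tet_subset_tetHalfspaces a (c - a) (ha.trans hac).le hp
  simp only [Matrix.cons_val] at h₁ h₂ h₃ h₄
  norm_cast at h₁ h₂ h₃ h₄
  rcases eq_vertex_of_mem_tetHalfspaces ha hac hg h₁ h₂ h₃ h₄ with
    ⟨rfl, rfl, rfl⟩ | ⟨rfl, rfl, rfl⟩ | ⟨rfl, rfl, rfl⟩ | ⟨rfl, rfl, rfl⟩ <;> simp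
end

section
/- Let c > 1 be an integer, let a, b be integers with 0 ≤ a, b < c, and suppose T_{a,b,c} is a clean lattice tetrahedron. Then T_{a,b,c} is empty if and only if for every integer k with 1 ≤ k ≤ c−1, 1 < ⟨k(c−a)/c⟩ + ⟨k(c−b)/c⟩ + k/c < 2, where ⟨x⟩ = x − ⌊x⌋ denotes the fractional part. -/
/-- `T_{a,b,c}` is a clean lattice tetrahedron: it contains no point of `ℤ³` on its
boundary other than its four vertices. -/
def TetIsClean (a b c : ℤ) : Prop :=
  ∀ x ∈ frontier (Tet a b c), IsLatticePt x →
    x = ![0,0,0] ∨ x = ![1,0,0] ∨ x = ![0,1,0] ∨ x = ![(a : ℝ), (b : ℝ), (c : ℝ)]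

/-!
For `0 < c`, the tetrahedron `T_{a,b,c}` is cut out by `0 ≤ z`, `a z ≤ c x`, `b z ≤ c y` and
`c x + c y + (1 - a - b) z ≤ c`. Hence its lattice points lie at heights `0 ≤ z ≤ c`, those at
heights `0` and `c` are vertices, and at a height `0 < k < c` the best candidate is
`(⌈ka/c⌉, ⌈kb/c⌉, k)`, which lies in `T_{a,b,c}` exactly when
`k(c-a) % c + k(c-b) % c + k ≤ c`. This gives the lower inequality. The upper one is the lower
one at height `c - k`: the reflection `k ↦ c - k` sends a nonzero residue `u` to `c - u`.
-/
theorem Int.fract_intCast_div_intCast {K : Type*} [Field K] [LinearOrder K] [IsStrictOrderedRing K]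
    [FloorRing K] {c : ℤ} (hc : 0 < c) (n : ℤ) :
    Int.fract ((n : K) / c) = ((n % c : ℤ) : K) / c := by
  lift c to ℕ using hc.le
  rw [Int.cast_natCast]
  exact Int.fract_div_intCast_eq_div_intCast_mod

theorem Int.neg_emod_of_emod_ne_zero {c x : ℤ} (hc : 0 < c) (hx : x % c ≠ 0) :
    -x % c = c - x % c := by
  rw [Int.neg_emod, if_neg (mt Int.emod_eq_zero_of_dvd hx), Int.natAbs_of_nonneg hc.le]

theorem Int.emod_le_self_of_nonneg {c x : ℤ} (hc : 0 < c) (hx : 0 ≤ x) : x % c ≤ x := by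
  rw [Int.emod_def]
  nlinarith [Int.ediv_nonneg hx hc.le]

theorem convexHull_tetrahedron {a b c : ℝ} (hc : 0 < c) :
    convexHull ℝ {![0, 0, 0], ![1, 0, 0], ![0, 1, 0], ![a, b, c]} =
      {x : Fin 3 → ℝ | 0 ≤ x 2 ∧ a * x 2 ≤ c * x 0 ∧ b * x 2 ≤ c * x 1 ∧
        c * x 0 + c * x 1 + (1 - a - b) * x 2 ≤ c} := by
  apply subset_antisymm
  · refine convexHull_min ?_ ?_
    · rintro y (rfl | rfl | rfl | rfl) <;> simp [hc.le]
      ring_nf; simp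
    · intro u hu v hv s t hs ht hst
      simp only [Set.mem_ofPred_eq, Pi.add_apply, Pi.smul_apply, smul_eq_mul] at *
      refine ⟨?_, ?_, ?_, ?_⟩ <;> nlinarith
  · rintro x ⟨h0, ha, hb, hsum⟩
    set t := x 2 / c
    have hct : x 2 = c * t := (mul_div_cancel₀ (x 2) hc.ne').symm
    set μ : Fin 4 → ℝ := ![1 - (x 0 - a * t) - (x 1 - b * t) - t, x 0 - a * t, x 1 - b * t, t]
    have hx : x = ∑ i, μ i • ![![0, 0, 0], ![1, 0, 0], ![0, 1, 0], ![a, b, c]] i := by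
      funext j
      fin_cases j <;> simp [μ, t, Fin.sum_univ_four] <;> field_simp <;> ring
    rw [hx]
    refine (convex_convexHull ℝ _).sum_mem (fun i _ => ?_) ?_ (fun i _ => subset_convexHull ℝ _ ?_)
    · rw [hct] at h0 ha hb hsum
      fin_cases i <;> simp [μ] <;> nlinarith
    · simp [μ, Fin.sum_univ_four]; ring
    · fin_cases i <;> simp

theorem isLatticePt_iff {x : Fin 3 → ℝ} :
    IsLatticePt x ↔ ∃ p q r : ℤ, x = ![(p : ℝ), q, r] := by
  constructor
  · intro hx
    obtain ⟨p, hp⟩ := hx 0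
    obtain ⟨q, hq⟩ := hx 1
    obtain ⟨r, hr⟩ := hx 2
    exact ⟨p, q, r, by ext i; fin_cases i <;> simp [hp, hq, hr]⟩
  · rintro ⟨p, q, r, rfl⟩ i
    fin_cases i
    exacts [⟨p, rfl⟩, ⟨q, rfl⟩, ⟨r, rfl⟩]

theorem intPoint_mem_tet_iff {a b c : ℤ} (hc : 0 < c) (p q r : ℤ) :
    ![(p : ℝ), q, r] ∈ Tet a b c ↔
      0 ≤ r ∧ a * r ≤ c * p ∧ b * r ≤ c * q ∧ c * p + c * q + (1 - a - b) * r ≤ c := by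
  rw [Tet, convexHull_tetrahedron (by exact_mod_cast hc)]
  simp only [Set.mem_ofPred_eq, Matrix.cons_val]
  norm_cast

theorem tetIsEmpty_iff_forall_not_exists {a b c : ℤ} (hc : 0 < c) :
    TetIsEmpty a b c ↔ ∀ r, 1 ≤ r → r ≤ c - 1 →
      ¬ ∃ p q : ℤ, a * r ≤ c * p ∧ b * r ≤ c * q ∧ c * p + c * q + (1 - a - b) * r ≤ c := by
  constructor
  · rintro hempty r hr1 hr2 ⟨p, q, hp, hq, hpq⟩
    have hmem := (intPoint_mem_tet_iff hc p q r).2 ⟨by omega, hp, hq, hpq⟩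
    rcases hempty _ hmem (isLatticePt_iff.2 ⟨p, q, r, rfl⟩) with h | h | h | h <;>
    · have h2 := congrFun h 2
      simp only [Matrix.cons_val] at h2
      norm_cast at h2
      omega
  · intro h x hx hlat
    obtain ⟨p, q, r, rfl⟩ := isLatticePt_iff.1 hlat
    obtain ⟨hr, hp, hq, hpq⟩ := (intPoint_mem_tet_iff hc p q r).1 hx
    have hrc : r ≤ c := by linarith
    rcases (show r = 0 ∨ r = c ∨ (1 ≤ r ∧ r ≤ c - 1) by omega) with rfl | rfl | ⟨hr1, hr2⟩
    · have hp0 : 0 ≤ p := by nlinarith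
      have hq0 : 0 ≤ q := by nlinarith
      have hpq1 : p + q ≤ 1 := by nlinarith
      rcases (show (p = 0 ∧ q = 0) ∨ (p = 1 ∧ q = 0) ∨ (p = 0 ∧ q = 1) by omega)
        with ⟨rfl, rfl⟩ | ⟨rfl, rfl⟩ | ⟨rfl, rfl⟩ <;> simp
    · have hap : a ≤ p := by nlinarith
      have hbq : b ≤ q := by nlinarith
      have hpq' : p + q ≤ a + b := by nlinarith
      obtain ⟨rfl, rfl⟩ : p = a ∧ q = b := by omega
      simp
    · exact absurd ⟨p, q, hp, hq, hpq⟩ (h r hr1 hr2)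

theorem emod_le_mul_sub {a c p r : ℤ} (hc : 0 < c) (h : a * r ≤ c * p) :
    r * (c - a) % c ≤ c * p - a * r := by
  rw [show r * (c - a) = (c * p - a * r) + c * (r - p) by ring, Int.add_mul_emod_self_left]
  exact Int.emod_le_self_of_nonneg hc (by linarith)

theorem exists_int_at_height_iff {a b c : ℤ} (hc : 0 < c) (r : ℤ) :
    (∃ p q : ℤ, a * r ≤ c * p ∧ b * r ≤ c * q ∧ c * p + c * q + (1 - a - b) * r ≤ c) ↔
      r * (c - a) % c + r * (c - b) % c + r ≤ c := by
  constructor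
  · rintro ⟨p, q, hp, hq, hpq⟩
    linarith [emod_le_mul_sub hc hp, emod_le_mul_sub hc hq]
  · intro h
    have ha := Int.emod_def (r * (c - a)) c
    have hb := Int.emod_def (r * (c - b)) c
    have ha0 := Int.emod_nonneg (r * (c - a)) hc.ne'
    have hb0 := Int.emod_nonneg (r * (c - b)) hc.ne'
    -- `r - r * (c - a) / c = ⌈r * a / c⌉` is the least admissible `p`
    exact ⟨r - r * (c - a) / c, r - r * (c - b) / c, by linarith, by linarith, by linarith⟩

theorem tetIsEmpty_iff_forall_lt {a b c : ℤ} (hc : 0 < c) :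
    TetIsEmpty a b c ↔ ∀ k, 1 ≤ k → k ≤ c - 1 → c < k * (c - a) % c + k * (c - b) % c + k := by
  simp only [tetIsEmpty_iff_forall_not_exists hc, exists_int_at_height_iff hc, not_le]

theorem emod_add_emod_add_lt_two_mul {a b c : ℤ} (hc : 0 < c)
    (h : ∀ k, 1 ≤ k → k ≤ c - 1 → c < k * (c - a) % c + k * (c - b) % c + k)
    {k : ℤ} (hk1 : 1 ≤ k) (hk2 : k ≤ c - 1) :
    k * (c - a) % c + k * (c - b) % c + k < 2 * c := by
  have hflip : ∀ x, (c - k) * (c - x) % c = -(k * (c - x)) % c := fun x => by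
    rw [show (c - k) * (c - x) = -(k * (c - x)) + c * (c - x) by ring, Int.add_mul_emod_self_left]
  have hck := h (c - k) (by omega) (by omega)
  rw [hflip, hflip] at hck
  have hua := Int.emod_lt_of_pos (k * (c - a)) hc
  have hub := Int.emod_lt_of_pos (k * (c - b)) hc
  by_cases hu : k * (c - a) % c = 0
  · omega
  by_cases hv : k * (c - b) % c = 0
  · omega
  rw [Int.neg_emod_of_emod_ne_zero hc hu, Int.neg_emod_of_emod_ne_zero hc hv] at hck
  omega

theorem stmt_19_general (a b c : ℤ) (hc : 1 < c) :
    TetIsEmpty a b c ↔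
      ∀ k : ℤ, 1 ≤ k → k ≤ c - 1 →
        1 < Int.fract ((k * (c - a) : ℤ) / (c : ℝ)) +
              Int.fract ((k * (c - b) : ℤ) / (c : ℝ)) + (k : ℝ) / (c : ℝ) ∧
          Int.fract ((k * (c - a) : ℤ) / (c : ℝ)) +
              Int.fract ((k * (c - b) : ℤ) / (c : ℝ)) + (k : ℝ) / (c : ℝ) < 2 := by
  have hc0 : 0 < c := by omega
  have hcR : (0 : ℝ) < c := by exact_mod_cast hc0
  have hsum : ∀ k : ℤ, Int.fract ((k * (c - a) : ℤ) / (c : ℝ)) +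
      Int.fract ((k * (c - b) : ℤ) / (c : ℝ)) + (k : ℝ) / c =
        ((k * (c - a) % c + k * (c - b) % c + k : ℤ) : ℝ) / c := fun k => by
    rw [Int.fract_intCast_div_intCast hc0, Int.fract_intCast_div_intCast hc0]
    push_cast
    ring
  simp only [hsum, one_lt_div hcR, div_lt_iff₀ hcR]
  norm_cast
  rw [tetIsEmpty_iff_forall_lt hc0]
  exact ⟨fun h k hk1 hk2 => ⟨h k hk1 hk2, emod_add_emod_add_lt_two_mul hc0 h hk1 hk2⟩,
    fun h k hk1 hk2 => (h k hk1 hk2).1⟩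

/-- Let `c > 1`, `0 ≤ a, b < c`, and suppose `T_{a,b,c}` is a clean lattice tetrahedron.
Then `T_{a,b,c}` is empty if and only if `1 < ⟨k(c-a)/c⟩ + ⟨k(c-b)/c⟩ + k/c < 2` for every
integer `k` with `1 ≤ k ≤ c - 1`, where `⟨x⟩` denotes the fractional part. -/
theorem stmt_19 (a b c : ℤ) (hc : 1 < c) (ha : 0 ≤ a) (hac : a < c) (hb : 0 ≤ b)
    (hbc : b < c) (hclean : TetIsClean a b c) :
    TetIsEmpty a b c ↔
      ∀ k : ℤ, 1 ≤ k → k ≤ c - 1 →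
        1 < Int.fract ((k * (c - a) : ℤ) / (c : ℝ)) +
              Int.fract ((k * (c - b) : ℤ) / (c : ℝ)) + (k : ℝ) / (c : ℝ) ∧
          Int.fract ((k * (c - a) : ℤ) / (c : ℝ)) +
              Int.fract ((k * (c - b) : ℤ) / (c : ℝ)) + (k : ℝ) / (c : ℝ) < 2 :=
  stmt_19_general a b c hc
end
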